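/- arXiv:2101.08556 — 11 statements merged into one kernel-verified Lean document; each statement's English description precedes it below -/
import Mathlib

section
/- Suppose that I(B) is a set of local units for A. Then for each n ∈ N(B) the dagger of n is unique: if k₁ and k₂ both satisfy kᵢ·n·kᵢ = kᵢ, n·kᵢ·n = n, and kᵢ·b·n ∈ B and n·b·kᵢ ∈ B for all b ∈ B, then k₁ = k₂. -/
namespace QCP

variable {R : Type*} [CommRing R] {A : Type*} [NonUnitalRing A]
  [Module R A] [SMulCommClass R A A] [IsScalarTower R A A]

/-- `e` is an idempotent element of the subalgebra `B`, i.e. `e ∈ I(B)`. -/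
def IsIdem (B : NonUnitalSubalgebra R A) (e : A) : Prop :=
  e ∈ B ∧ e * e = e

/-- The idempotents of `B` form a set of local units for `A`. -/
def HasLocalUnits (B : NonUnitalSubalgebra R A) : Prop :=
  ∀ F : Finset A, ∃ e : A, IsIdem B e ∧ ∀ a ∈ F, e * a = a ∧ a * e = a

/-- `k` is a dagger for `n` relative to `B`. -/
def IsDagger (B : NonUnitalSubalgebra R A) (n k : A) : Prop :=
  k * n * k = k ∧ n * k * n = n ∧ ∀ b ∈ B, k * b * n ∈ B ∧ n * b * k ∈ B

/-- `n` belongs to the normaliser `N(B)` of `B` in `A`. -/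
def MemNormaliser (B : NonUnitalSubalgebra R A) (n : A) : Prop :=
  ∃ k : A, IsDagger B n k

/-- Condition (WT): `B` is without torsion. -/
def CondWT (B : NonUnitalSubalgebra R A) : Prop :=
  ∀ e : A, e ∈ B → e * e = e → ∀ t : R, t • e = 0 → t = 0 ∨ e = 0

/-- The partial order on `N(B)`: `m ≤ n` iff `m = n·e` for some `e ∈ I(B)`. -/
def NormLE (B : NonUnitalSubalgebra R A) (m n : A) : Prop :=
  ∃ e : A, IsIdem B e ∧ m = n * e

/-- A filter of `N(B)`. -/
def IsFilterOf (B : NonUnitalSubalgebra R A) (U : Set A) : Prop :=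
  (∀ n ∈ U, MemNormaliser B n) ∧ (0 : A) ∉ U ∧
    (∀ m ∈ U, ∀ n : A, MemNormaliser B n → NormLE B m n → n ∈ U) ∧
    (∀ m ∈ U, ∀ n ∈ U, ∃ p ∈ U, NormLE B p m ∧ NormLE B p n)

/-- An ultrafilter of `N(B)`: a filter maximal among filters under inclusion. -/
def IsUltrafilterOf (B : NonUnitalSubalgebra R A) (U : Set A) : Prop :=
  IsFilterOf B U ∧ ∀ V : Set A, IsFilterOf B V → U ⊆ V → U = V

/-- `P` is a conditional expectation from `A` onto `B`. -/
def IsCondExp (B : NonUnitalSubalgebra R A) (P : A →ₗ[R] A) : Prop :=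
  (∀ a : A, P a ∈ B) ∧ (∀ b ∈ B, P b = b) ∧
    (∀ a : A, ∀ b ∈ B, ∀ b' ∈ B, P (b * a * b') = b * P a * b')

/-- The conditional expectation `P` is faithful. -/
def IsFaithful (B : NonUnitalSubalgebra R A) (P : A →ₗ[R] A) : Prop :=
  ∀ a : A, a ≠ 0 → ∃ n : A, MemNormaliser B n ∧ P (n * a) ≠ 0

/-- The conditional expectation `P` is implemented by idempotents. -/
def ImplementedByIdem (B : NonUnitalSubalgebra R A) (P : A →ₗ[R] A) : Prop :=
  ∀ n : A, MemNormaliser B n → ∃ e : A, IsIdem B e ∧ P n = n * e ∧ P n = e * n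

/-- `(A, B)` is an algebraic pair: `B` is commutative, satisfies (WT), `I(B)` is a set of
local units for `A`, `B` is spanned by `I(B)`, `A` is spanned by `N(B)`, and there is a
faithful conditional expectation `A → B`. -/
def IsAlgebraicPair (B : NonUnitalSubalgebra R A) : Prop :=
  (∀ x ∈ B, ∀ y ∈ B, x * y = y * x) ∧ CondWT B ∧ HasLocalUnits B ∧
    (B : Set A) = (Submodule.span R {e : A | IsIdem B e} : Set A) ∧
    Submodule.span R {n : A | MemNormaliser B n} = ⊤ ∧
    ∃ P : A →ₗ[R] A, IsCondExp B P ∧ IsFaithful B P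

/-- A free normaliser: an element of `N(B)` that lies in `B` or squares to zero. -/
def IsFreeNormaliser (B : NonUnitalSubalgebra R A) (n : A) : Prop :=
  MemNormaliser B n ∧ (n ∈ B ∨ n * n = 0)

/-- `(A, B)` is an algebraic diagonal pair. -/
def IsDiagonalPair (B : NonUnitalSubalgebra R A) : Prop :=
  IsAlgebraicPair B ∧ Submodule.span R {n : A | IsFreeNormaliser B n} = ⊤

/-- `(A, B)` is an algebraic Cartan pair: `B` is a maximal commutative subalgebra. -/
def IsCartanPair (B : NonUnitalSubalgebra R A) : Prop :=
  IsAlgebraicPair B ∧ ∀ a : A, (∀ b ∈ B, a * b = b * a) → a ∈ B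

/-- `(A, B)` is an algebraic quasi-Cartan pair. -/
def IsQuasiCartanPair (B : NonUnitalSubalgebra R A) : Prop :=
  IsAlgebraicPair B ∧
    ∃ P : A →ₗ[R] A, IsCondExp B P ∧ IsFaithful B P ∧ ImplementedByIdem B P

end QCP

-- The argument for uniqueness of inverses in an inverse semigroup.
theorem eq_of_commute_of_inner_inverse {S : Type*} [Semigroup S] {n k₁ k₂ : S}
    (hk₁ : k₁ * n * k₁ = k₁) (hn₁ : n * k₁ * n = n)
    (hk₂ : k₂ * n * k₂ = k₂) (hn₂ : n * k₂ * n = n)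
    (hleft : Commute (k₁ * n) (k₂ * n)) (hright : Commute (n * k₁) (n * k₂)) :
    k₁ = k₂ := by
  have h₁ : k₁ = k₂ * n * k₁ :=
    calc k₁ = k₁ * (n * k₂ * n) * k₁ := by rw [hn₂, hk₁]
      _ = (k₁ * n) * (k₂ * n) * k₁ := by simp only [mul_assoc]
      _ = (k₂ * n) * (k₁ * n * k₁) := by rw [hleft.eq]; simp only [mul_assoc]
      _ = k₂ * n * k₁ := by rw [hk₁, mul_assoc]
  have h₂ : k₂ = k₂ * n * k₁ :=
    calc k₂ = k₂ * (n * k₁ * n) * k₂ := by rw [hn₁, hk₂]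
      _ = k₂ * ((n * k₁) * (n * k₂)) := by simp only [mul_assoc]
      _ = (k₂ * n * k₂) * n * k₁ := by rw [hright.eq]; simp only [mul_assoc]
      _ = k₂ * n * k₁ := by rw [hk₂]
  rw [h₁, ← h₂]

namespace QCP

variable {R : Type*} [CommRing R] {A : Type*} [NonUnitalRing A] [Module R A]
  {B : NonUnitalSubalgebra R A} {n k e : A}

theorem IsDagger.dagger_mul_mem (h : IsDagger B n k) (he : e ∈ B) (hen : e * n = n) :
    k * n ∈ B := by
  simpa only [mul_assoc, hen] using (h.2.2 e he).1

theorem IsDagger.mul_dagger_mem (h : IsDagger B n k) (he : e ∈ B) (hne : n * e = n) :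
    n * k ∈ B := by
  simpa only [hne] using (h.2.2 e he).2

end QCP

theorem dagger_unique_general {R : Type*} [CommRing R] {A : Type*} [NonUnitalRing A]
    [Module R A]
    (B : NonUnitalSubalgebra R A)
    (hcomm : ∀ x ∈ B, ∀ y ∈ B, x * y = y * x)
    (hlu : QCP.HasLocalUnits B)
    (n : A)
    (k₁ k₂ : A) (h₁ : QCP.IsDagger B n k₁) (h₂ : QCP.IsDagger B n k₂) :
    k₁ = k₂ := by
  obtain ⟨e, ⟨he, -⟩, hunit⟩ := hlu {n}
  obtain ⟨hen, hne⟩ := hunit n (Finset.mem_singleton_self n)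
  exact eq_of_commute_of_inner_inverse h₁.1 h₁.2.1 h₂.1 h₂.2.1
    (hcomm _ (h₁.dagger_mul_mem he hen) _ (h₂.dagger_mul_mem he hen))
    (hcomm _ (h₁.mul_dagger_mem he hne) _ (h₂.mul_dagger_mem he hne))

/-- uniqueness of the dagger when `I(B)` is a set of local units for `A`. -/
theorem dagger_unique {R : Type*} [CommRing R] {A : Type*} [NonUnitalRing A]
    [Module R A] [SMulCommClass R A A] [IsScalarTower R A A]
    (B : NonUnitalSubalgebra R A)
    (hcomm : ∀ x ∈ B, ∀ y ∈ B, x * y = y * x)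
    (hlu : QCP.HasLocalUnits B)
    (n : A) (hn : QCP.MemNormaliser B n)
    (k₁ k₂ : A) (h₁ : QCP.IsDagger B n k₁) (h₂ : QCP.IsDagger B n k₂) :
    k₁ = k₂ :=
  dagger_unique_general B hcomm hlu n k₁ k₂ h₁ h₂
end

section
/- Suppose that I(B) is a set of local units for A. If n, m ∈ N(B) with daggers k and l respectively, then n·m ∈ N(B) and l·k is a dagger for n·m; that is, (n·m)·(l·k)·(n·m) = n·m, (l·k)·(n·m)·(l·k) = l·k, and (l·k)·b·(n·m) ∈ B and (n·m)·b·(l·k) ∈ B for all b ∈ B. -/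
/-! `k n` and `m l` are idempotents, and local units put them in `B`: if `k e = k` with
`e ∈ B` then `k n = k e n ∈ B`. As `B` is commutative they commute, and this is exactly what
collapses `(n m)(l k)(n m)` to `(n k n)(m l m) = n m`, and likewise for `l k`. -/

namespace QCP

variable {R : Type*} [CommRing R] {A : Type*} [NonUnitalRing A] [Module R A]
  {B : NonUnitalSubalgebra R A} {n m k l : A}

namespace IsDagger

theorem dagger_mul_mem_s1 (hk : IsDagger B n k) (hlu : HasLocalUnits B) : k * n ∈ B := by
  obtain ⟨e, ⟨heB, -⟩, he⟩ := hlu {k}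
  simpa only [(he k (Finset.mem_singleton_self k)).2] using (hk.2.2 e heB).1

theorem mul_dagger_mem_s1 (hk : IsDagger B n k) (hlu : HasLocalUnits B) : n * k ∈ B := by
  obtain ⟨e, ⟨heB, -⟩, he⟩ := hlu {n}
  simpa only [(he n (Finset.mem_singleton_self n)).2] using (hk.2.2 e heB).2

theorem mul (hk : IsDagger B n k) (hl : IsDagger B m l)
    (hcomm : m * l * (k * n) = k * n * (m * l)) : IsDagger B (n * m) (l * k) := by
  refine ⟨?_, ?_, fun b hb => ⟨?_, ?_⟩⟩
  · calc l * k * (n * m) * (l * k) = l * (k * n * (m * l)) * k := by noncomm_ring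
      _ = l * (m * l * (k * n)) * k := by rw [hcomm]
      _ = (l * m * l) * (k * n * k) := by noncomm_ring
      _ = l * k := by rw [hl.1, hk.1]
  · calc n * m * (l * k) * (n * m) = n * (m * l * (k * n)) * m := by noncomm_ring
      _ = n * (k * n * (m * l)) * m := by rw [hcomm]
      _ = (n * k * n) * (m * l * m) := by noncomm_ring
      _ = n * m := by rw [hk.2.1, hl.2.1]
  · have hkbn : l * k * b * (n * m) = l * (k * b * n) * m := by noncomm_ring
    exact hkbn ▸ (hl.2.2 _ (hk.2.2 b hb).1).1
  · have hmbl : n * m * b * (l * k) = n * (m * b * l) * k := by noncomm_ring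
    exact hmbl ▸ (hk.2.2 _ (hl.2.2 b hb).2).2

end IsDagger

end QCP

theorem normaliser_mul_general {R : Type*} [CommRing R] {A : Type*} [NonUnitalRing A]
    [Module R A]
    (B : NonUnitalSubalgebra R A)
    (hcomm : ∀ x ∈ B, ∀ y ∈ B, x * y = y * x)
    (hlu : QCP.HasLocalUnits B)
    (n m k l : A) (hk : QCP.IsDagger B n k) (hl : QCP.IsDagger B m l) :
    QCP.MemNormaliser B (n * m) ∧ QCP.IsDagger B (n * m) (l * k) := by
  have hdag : QCP.IsDagger B (n * m) (l * k) :=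
    hk.mul hl (hcomm _ (hl.mul_dagger_mem_s1 hlu) _ (hk.dagger_mul_mem_s1 hlu))
  exact ⟨⟨l * k, hdag⟩, hdag⟩

/-- `N(B)` is closed under multiplication, with `l·k` a dagger for `n·m`. -/
theorem normaliser_mul {R : Type*} [CommRing R] {A : Type*} [NonUnitalRing A]
    [Module R A] [SMulCommClass R A A] [IsScalarTower R A A]
    (B : NonUnitalSubalgebra R A)
    (hcomm : ∀ x ∈ B, ∀ y ∈ B, x * y = y * x)
    (hlu : QCP.HasLocalUnits B)
    (n m k l : A) (hk : QCP.IsDagger B n k) (hl : QCP.IsDagger B m l) :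
    QCP.MemNormaliser B (n * m) ∧ QCP.IsDagger B (n * m) (l * k) :=
  normaliser_mul_general B hcomm hlu n m k l hk hl
end

section
/- Suppose that I(B) is a set of local units for A. Then the idempotent elements of N(B) are precisely the elements of I(B): if n ∈ N(B) satisfies n·n = n, then n ∈ B (so n ∈ I(B)); and conversely every e ∈ I(B) belongs to N(B) with e itself a dagger for e. -/
/-!
If `n = n * n` has dagger `k`, local units put `k * n` and `n * k` into `B`, where they commute.
Then `k = k * n * n * k = n * k * k * n`, and multiplying by `n` on either side gives
`n * k = k = k * n`; hence `n = n * k * n = k`, and `n = n * k ∈ B`.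
-/

theorem IsIdempotentElem.eq_of_commute_of_reflexive_inverse {M : Type*} [Semigroup M] {n k : M}
    (hn : IsIdempotentElem n) (hknk : k * n * k = k) (hnkn : n * k * n = n)
    (hcomm : Commute (k * n) (n * k)) : k = n := by
  have hk : n * k * (k * n) = k := by
    rw [← hcomm.eq, mul_assoc, ← mul_assoc n n k, hn.eq, ← mul_assoc, hknk]
  have hnk : n * k = k :=
    calc n * k = n * (n * k * (k * n)) := by rw [hk]
      _ = n * n * k * (k * n) := by simp only [mul_assoc]
      _ = k := by rw [hn.eq, hk]
  have hkn : k * n = k :=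
    calc k * n = n * k * (k * n) * n := by rw [hk]
      _ = n * k * (k * (n * n)) := by simp only [mul_assoc]
      _ = k := by rw [hn.eq, hk]
  rw [← hnkn, hnk, hkn]

namespace QCP

variable {R : Type*} [CommRing R] {A : Type*} [NonUnitalRing A] [Module R A]
  {B : NonUnitalSubalgebra R A}

theorem IsDagger.mul_mem_of_hasLocalUnits (hlu : HasLocalUnits B) {n k : A}
    (h : IsDagger B n k) : k * n ∈ B ∧ n * k ∈ B := by
  classical
  obtain ⟨e, ⟨heB, -⟩, he⟩ := hlu {n, k}
  have hen : e * n = n := (he n (by simp)).1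
  have hek : e * k = k := (he k (by simp)).1
  obtain ⟨hkn, hnk⟩ := h.2.2 e heB
  rw [mul_assoc, hen] at hkn
  rw [mul_assoc, hek] at hnk
  exact ⟨hkn, hnk⟩

theorem IsIdem.isDagger_self {e : A} (he : IsIdem B e) : IsDagger B e e := by
  obtain ⟨heB, hee⟩ := he
  have heee : e * e * e = e := by rw [hee, hee]
  exact ⟨heee, heee, fun b hb => ⟨mul_mem (mul_mem heB hb) heB, mul_mem (mul_mem heB hb) heB⟩⟩

end QCP

theorem normaliser_idempotents_general {R : Type*} [CommRing R] {A : Type*} [NonUnitalRing A]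
    [Module R A]
    (B : NonUnitalSubalgebra R A)
    (hcomm : ∀ x ∈ B, ∀ y ∈ B, x * y = y * x)
    (hlu : QCP.HasLocalUnits B) :
    (∀ n : A, QCP.MemNormaliser B n → n * n = n → n ∈ B) ∧
      (∀ e : A, QCP.IsIdem B e → QCP.IsDagger B e e) := by
  refine ⟨fun n ⟨k, hk⟩ hnn => ?_, fun e he => he.isDagger_self⟩
  obtain ⟨hknB, hnkB⟩ := hk.mul_mem_of_hasLocalUnits hlu
  have hkn : k = n :=
    IsIdempotentElem.eq_of_commute_of_reflexive_inverse hnn hk.1 hk.2.1 (hcomm _ hknB _ hnkB)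
  rwa [hkn, hnn] at hnkB

/-- the idempotent elements of `N(B)` are precisely the elements of `I(B)`. -/
theorem normaliser_idempotents {R : Type*} [CommRing R] {A : Type*} [NonUnitalRing A]
    [Module R A] [SMulCommClass R A A] [IsScalarTower R A A]
    (B : NonUnitalSubalgebra R A)
    (hcomm : ∀ x ∈ B, ∀ y ∈ B, x * y = y * x)
    (hlu : QCP.HasLocalUnits B) :
    (∀ n : A, QCP.MemNormaliser B n → n * n = n → n ∈ B) ∧
      (∀ e : A, QCP.IsIdem B e → QCP.IsDagger B e e) :=
  normaliser_idempotents_general B hcomm hlu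
end

section
/- Suppose that B satisfies condition (WT) and that I(B) is a set of local units for A. Let U be an ultrafilter of N(B) and let n ∈ U. If e₁, …, e_k ∈ I(B) are pairwise orthogonal idempotents (eᵢ·eⱼ = 0 for i ≠ j) satisfying n = Σᵢ₌₁ᵏ n·eᵢ, then there exists a unique index i with n·eᵢ ∈ U. Dually, if f₁, …, f_k ∈ I(B) are pairwise orthogonal idempotents with n = Σᵢ₌₁ᵏ fᵢ·n, then fᵢ·n ∈ U for a unique index i. -/
/-!
If every summand `n·eᵢ` were killed by some `uᵢ ∈ U` (`uᵢ·eᵢ = 0`), a common lower bound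
`p ≤ n, uᵢ` in `U` would satisfy `p = Σ p·eᵢ = 0`. So some `eᵢ` kills no element of `U`; then the
upward closure of `U·eᵢ` in `N(B)` is a filter containing `U`, and maximality puts `n·eᵢ` in `U`.
Two summands cannot both lie in `U`: a common lower bound would be both fixed and killed by `eⱼ`.
The dual statement reduces to the first one, because `fᵢ·n = n·(n†fᵢn)` and the `n†fᵢn` are again
pairwise orthogonal idempotents of `B`.
-/

namespace QCP

variable {R : Type*} [CommRing R] {A : Type*} [NonUnitalRing A]
  [Module R A] {B : NonUnitalSubalgebra R A}

theorem mul_right_comm_of_mem (hcomm : ∀ x ∈ B, ∀ y ∈ B, x * y = y * x)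
    {b c : A} (hb : b ∈ B) (hc : c ∈ B) (x : A) : x * b * c = x * c * b := by
  rw [mul_assoc, hcomm b hb c hc, ← mul_assoc]

theorem IsIdem.mul (hcomm : ∀ x ∈ B, ∀ y ∈ B, x * y = y * x)
    {a b : A} (ha : IsIdem B a) (hb : IsIdem B b) : IsIdem B (a * b) := by
  refine ⟨mul_mem ha.1 hb.1, ?_⟩
  calc a * b * (a * b) = a * b * a * b := (mul_assoc _ _ _).symm
    _ = a * a * (b * b) := by rw [mul_right_comm_of_mem hcomm hb.1 ha.1, mul_assoc (a * a)]
    _ = a * b := by rw [ha.2, hb.2]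

theorem NormLE.trans (hcomm : ∀ x ∈ B, ∀ y ∈ B, x * y = y * x)
    {p m q : A} (hpm : NormLE B p m) (hmq : NormLE B m q) : NormLE B p q := by
  obtain ⟨f, hf, rfl⟩ := hpm
  obtain ⟨g, hg, rfl⟩ := hmq
  exact ⟨g * f, hg.mul hcomm hf, mul_assoc q g f⟩

theorem NormLE.mul_eq_zero (hcomm : ∀ x ∈ B, ∀ y ∈ B, x * y = y * x)
    {p q f : A} (hpq : NormLE B p q) (hf : f ∈ B) (hqf : q * f = 0) : p * f = 0 := by
  obtain ⟨g, hg, rfl⟩ := hpq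
  rw [mul_right_comm_of_mem hcomm hg.1 hf, hqf, zero_mul]

theorem NormLE.mul_idem_eq_self (hcomm : ∀ x ∈ B, ∀ y ∈ B, x * y = y * x)
    {p q f : A} (hpq : NormLE B p (q * f)) (hf : IsIdem B f) : p * f = p := by
  obtain ⟨g, hg, rfl⟩ := hpq
  rw [mul_right_comm_of_mem hcomm hg.1 hf.1, mul_assoc q f f, hf.2]

theorem IsDagger.mul_mem_left (hlu : HasLocalUnits B) {n d : A} (hd : IsDagger B n d) :
    d * n ∈ B := by
  classical
  obtain ⟨u, hu, hunit⟩ := hlu {d}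
  simpa only [(hunit d (Finset.mem_singleton_self d)).2] using (hd.2.2 u hu.1).1

theorem IsDagger.mul_mem_right (hlu : HasLocalUnits B) {n d : A} (hd : IsDagger B n d) :
    n * d ∈ B := by
  classical
  obtain ⟨u, hu, hunit⟩ := hlu {n}
  simpa only [(hunit n (Finset.mem_singleton_self n)).2] using (hd.2.2 u hu.1).2

theorem IsDagger.conj_mul_conj (hcomm : ∀ x ∈ B, ∀ y ∈ B, x * y = y * x)
    {n d f : A} (hd : IsDagger B n d) (hnd : n * d ∈ B) (hf : f ∈ B) (f' : A) :
    d * f * n * (d * f' * n) = d * (f * f') * n := by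
  calc d * f * n * (d * f' * n) = d * f * (n * d) * f' * n := by simp only [mul_assoc]
    _ = d * n * d * (f * f') * n := by
      rw [mul_right_comm_of_mem hcomm hf hnd d]; simp only [mul_assoc]
    _ = d * (f * f') * n := by rw [hd.1]

theorem IsDagger.mul_conj (hcomm : ∀ x ∈ B, ∀ y ∈ B, x * y = y * x)
    {n d f : A} (hd : IsDagger B n d) (hnd : n * d ∈ B) (hf : f ∈ B) :
    n * (d * f * n) = f * n := by
  calc n * (d * f * n) = n * d * f * n := by simp only [mul_assoc]
    _ = f * (n * d * n) := by rw [hcomm _ hnd f hf]; simp only [mul_assoc]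
    _ = f * n := by rw [hd.2.1]

theorem IsDagger.isIdem_conj (hcomm : ∀ x ∈ B, ∀ y ∈ B, x * y = y * x)
    {n d f : A} (hd : IsDagger B n d) (hnd : n * d ∈ B) (hf : IsIdem B f) :
    IsIdem B (d * f * n) :=
  ⟨(hd.2.2 f hf.1).1, by rw [hd.conj_mul_conj hcomm hnd hf.1, hf.2]⟩

/-- A dagger of `n·e` is `e·n†`. -/
theorem MemNormaliser.mul_isIdem (hcomm : ∀ x ∈ B, ∀ y ∈ B, x * y = y * x)
    (hlu : HasLocalUnits B) {n e : A} (hn : MemNormaliser B n) (he : IsIdem B e) :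
    MemNormaliser B (n * e) := by
  obtain ⟨d, hd⟩ := hn
  have hdn : d * n ∈ B := hd.mul_mem_left hlu
  refine ⟨e * d, ?_, ?_, fun b hb => ⟨?_, ?_⟩⟩
  · calc e * d * (n * e) * (e * d) = e * (d * n) * (e * e) * d := by simp only [mul_assoc]
      _ = e * (d * n) * e * d := by rw [he.2]
      _ = e * (d * n * d) := by rw [mul_right_comm_of_mem hcomm hdn he.1, he.2, mul_assoc]
      _ = e * d := by rw [hd.1]
  · calc n * e * (e * d) * (n * e) = n * (e * e) * (d * n) * e := by simp only [mul_assoc]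
      _ = n * (d * n) * e * e := by rw [he.2, mul_right_comm_of_mem hcomm he.1 hdn n]
      _ = n * e := by rw [mul_assoc _ e e, he.2, ← mul_assoc n d n, hd.2.1]
  · have h : e * d * b * (n * e) = e * (d * b * n) * e := by simp only [mul_assoc]
    rw [h]
    exact mul_mem (mul_mem he.1 (hd.2.2 b hb).1) he.1
  · have h : n * e * b * (e * d) = n * (e * b * e) * d := by simp only [mul_assoc]
    rw [h]
    exact (hd.2.2 _ (mul_mem (mul_mem he.1 hb) he.1)).2

theorem IsFilterOf.exists_normLE_forall_mem (hcomm : ∀ x ∈ B, ∀ y ∈ B, x * y = y * x)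
    {U : Set A} (hU : IsFilterOf B U) {m : A} (hm : m ∈ U) {ι : Type*} (q : ι → A)
    (s : Finset ι) (hq : ∀ i ∈ s, q i ∈ U) :
    ∃ p ∈ U, NormLE B p m ∧ ∀ i ∈ s, NormLE B p (q i) := by
  classical
  induction s using Finset.induction_on with
  | empty =>
    obtain ⟨p, hp, hpm, -⟩ := hU.2.2.2 m hm m hm
    exact ⟨p, hp, hpm, by simp⟩
  | insert j s _ ih =>
    obtain ⟨p, hp, hpm, hps⟩ := ih fun i hi => hq i (Finset.mem_insert_of_mem hi)
    obtain ⟨p', hp', hp'p, hp'j⟩ := hU.2.2.2 p hp (q j) (hq j (Finset.mem_insert_self j s))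
    refine ⟨p', hp', hp'p.trans hcomm hpm, fun i hi => ?_⟩
    rcases Finset.mem_insert.1 hi with rfl | hi
    · exact hp'j
    · exact hp'p.trans hcomm (hps i hi)

theorem IsFilterOf.not_mul_mem_of_mul_eq_zero (hcomm : ∀ x ∈ B, ∀ y ∈ B, x * y = y * x)
    {U : Set A} (hU : IsFilterOf B U) {a b e f : A} (hf : IsIdem B f)
    (hef : e * f = 0) (ha : a * e ∈ U) : b * f ∉ U := by
  intro hb
  obtain ⟨p, hp, hpa, hpb⟩ := hU.2.2.2 _ ha _ hb
  have hp0 : p * f = 0 := hpa.mul_eq_zero hcomm hf.1 (by rw [mul_assoc, hef, mul_zero])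
  exact hU.2.1 ((hpb.mul_idem_eq_self hcomm hf).symm.trans hp0 ▸ hp)

theorem IsFilterOf.exists_forall_mul_ne_zero (hcomm : ∀ x ∈ B, ∀ y ∈ B, x * y = y * x)
    {U : Set A} (hU : IsFilterOf B U) {n : A} (hn : n ∈ U) {ι : Type*} [Fintype ι]
    {e : ι → A} (he : ∀ i, e i ∈ B) (hsum : n = ∑ i, n * e i) :
    ∃ i, ∀ u ∈ U, u * e i ≠ 0 := by
  by_contra! hkill
  choose u hu hue using hkill
  obtain ⟨p, hp, ⟨g, hg, hpn⟩, hpu⟩ :=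
    hU.exists_normLE_forall_mem hcomm hn u Finset.univ fun i _ => hu i
  have hp0 : p = 0 :=
    calc p = (∑ i, n * e i) * g := by rw [← hsum, hpn]
      _ = ∑ i, p * e i := by
        rw [Finset.sum_mul, hpn]
        exact Finset.sum_congr rfl fun i _ => mul_right_comm_of_mem hcomm (he i) hg.1 n
      _ = 0 := Finset.sum_eq_zero fun i hi => (hpu i hi).mul_eq_zero hcomm (he i) (hue i)
  exact hU.2.1 (hp0 ▸ hp)

def upperClosureMulRight (B : NonUnitalSubalgebra R A) (U : Set A) (e : A) : Set A :=
  {x | MemNormaliser B x ∧ ∃ u ∈ U, NormLE B (u * e) x}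

theorem IsFilterOf.upperClosureMulRight (hcomm : ∀ x ∈ B, ∀ y ∈ B, x * y = y * x)
    (hlu : HasLocalUnits B) {U : Set A} (hU : IsFilterOf B U) {e : A} (he : IsIdem B e)
    (hne : ∀ u ∈ U, u * e ≠ 0) : IsFilterOf B (upperClosureMulRight B U e) := by
  refine ⟨fun x hx => hx.1, ?_, ?_, ?_⟩
  · rintro ⟨-, u, hu, g, -, hue⟩
    exact hne u hu (by rw [hue, zero_mul])
  · rintro x ⟨-, u, hu, hux⟩ y hy hxy
    exact ⟨hy, u, hu, hux.trans hcomm hxy⟩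
  · rintro x ⟨-, u, hu, hux⟩ y ⟨-, v, hv, hvy⟩
    obtain ⟨p, hp, ⟨g, hg, hpu⟩, ⟨h, hh, hpv⟩⟩ := hU.2.2.2 u hu v hv
    refine ⟨p * e, ⟨(hU.1 p hp).mul_isIdem hcomm hlu he, p, hp, e, he, ?_⟩, ?_, ?_⟩
    · rw [mul_assoc, he.2]
    · exact NormLE.trans hcomm ⟨g, hg, by rw [hpu, mul_right_comm_of_mem hcomm hg.1 he.1]⟩ hux
    · exact NormLE.trans hcomm ⟨h, hh, by rw [hpv, mul_right_comm_of_mem hcomm hh.1 he.1]⟩ hvy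

theorem IsUltrafilterOf.mul_mem_of_forall_mul_ne_zero
    (hcomm : ∀ x ∈ B, ∀ y ∈ B, x * y = y * x) (hlu : HasLocalUnits B) {U : Set A}
    (hU : IsUltrafilterOf B U) {e : A} (he : IsIdem B e) (hne : ∀ u ∈ U, u * e ≠ 0)
    {u : A} (hu : u ∈ U) : u * e ∈ U := by
  have hsub : U ⊆ upperClosureMulRight B U e := fun v hv =>
    ⟨hU.1.1 v hv, v, hv, e, he, rfl⟩
  rw [hU.2 _ (hU.1.upperClosureMulRight hcomm hlu he hne) hsub]
  exact ⟨(hU.1.1 u hu).mul_isIdem hcomm hlu he, u, hu, e, he, by rw [mul_assoc, he.2]⟩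

theorem IsUltrafilterOf.existsUnique_mul_mem (hcomm : ∀ x ∈ B, ∀ y ∈ B, x * y = y * x)
    (hlu : HasLocalUnits B) {U : Set A} (hU : IsUltrafilterOf B U) {n : A} (hn : n ∈ U)
    {ι : Type*} [Fintype ι] {e : ι → A} (he : ∀ i, IsIdem B (e i))
    (horth : ∀ i j, i ≠ j → e i * e j = 0) (hsum : n = ∑ i, n * e i) :
    ∃! i, n * e i ∈ U := by
  obtain ⟨i, hi⟩ := hU.1.exists_forall_mul_ne_zero hcomm hn (fun i => (he i).1) hsum
  have hmem := hU.mul_mem_of_forall_mul_ne_zero hcomm hlu (he i) hi hn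
  refine ⟨i, hmem, fun j hj => ?_⟩
  by_contra hji
  exact hU.1.not_mul_mem_of_mul_eq_zero hcomm (he i) (horth j i hji) hj hmem

end QCP

theorem ultrafilter_partition_general {R : Type*} [CommRing R] {A : Type*} [NonUnitalRing A]
    [Module R A]
    (B : NonUnitalSubalgebra R A)
    (hcomm : ∀ x ∈ B, ∀ y ∈ B, x * y = y * x)
    (hlu : QCP.HasLocalUnits B)
    (U : Set A) (hU : QCP.IsUltrafilterOf B U)
    (n : A) (hn : n ∈ U) (k : ℕ) :
    (∀ e : Fin k → A, (∀ i, QCP.IsIdem B (e i)) →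
        (∀ i j, i ≠ j → e i * e j = 0) → n = ∑ i, n * e i →
        ∃! i : Fin k, n * e i ∈ U) ∧
      (∀ f : Fin k → A, (∀ i, QCP.IsIdem B (f i)) →
        (∀ i j, i ≠ j → f i * f j = 0) → n = ∑ i, f i * n →
        ∃! i : Fin k, f i * n ∈ U) := by
  refine ⟨fun e he horth hsum => hU.existsUnique_mul_mem hcomm hlu hn he horth hsum,
    fun f hf horth hsum => ?_⟩
  obtain ⟨d, hd⟩ := hU.1.1 n hn
  have hnd : n * d ∈ B := hd.mul_mem_right hlu
  have hconj : ∀ i, n * (d * f i * n) = f i * n := fun i => hd.mul_conj hcomm hnd (hf i).1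
  simp only [← hconj] at hsum ⊢
  refine hU.existsUnique_mul_mem hcomm hlu hn (fun i => hd.isIdem_conj hcomm hnd (hf i))
    (fun i j hij => ?_) hsum
  rw [hd.conj_mul_conj hcomm hnd (hf i).1, horth i j hij, mul_zero, zero_mul]

/-- if an element of an ultrafilter decomposes along pairwise orthogonal
idempotents, then exactly one summand lies in the ultrafilter. -/
theorem ultrafilter_partition {R : Type*} [CommRing R] {A : Type*} [NonUnitalRing A]
    [Module R A] [SMulCommClass R A A] [IsScalarTower R A A]
    (B : NonUnitalSubalgebra R A)
    (hcomm : ∀ x ∈ B, ∀ y ∈ B, x * y = y * x)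
    (hWT : QCP.CondWT B)
    (hlu : QCP.HasLocalUnits B)
    (U : Set A) (hU : QCP.IsUltrafilterOf B U)
    (n : A) (hn : n ∈ U) (k : ℕ) :
    (∀ e : Fin k → A, (∀ i, QCP.IsIdem B (e i)) →
        (∀ i j, i ≠ j → e i * e j = 0) → n = ∑ i, n * e i →
        ∃! i : Fin k, n * e i ∈ U) ∧
      (∀ f : Fin k → A, (∀ i, QCP.IsIdem B (f i)) →
        (∀ i j, i ≠ j → f i * f j = 0) → n = ∑ i, f i * n →
        ∃! i : Fin k, f i * n ∈ U) :=
  ultrafilter_partition_general B hcomm hlu U hU n hn k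
end

section
/- Suppose that B satisfies condition (WT) and that I(B) is a set of local units for A. If U is an ultrafilter of N(B) and t is a unit of R, then t•U := {t•m : m ∈ U} is again an ultrafilter of N(B). -/
/-! Scaling by a unit `t` is a bijection of `N(B)` (a dagger of `t • n` is `t⁻¹ • k`) that
preserves the order `≤` in both directions, so it permutes the filters of `N(B)` and hence
its ultrafilters. -/

namespace QCP

open Pointwise

variable {R : Type*} [CommRing R] {A : Type*} [NonUnitalRing A] [Module R A]
  {B : NonUnitalSubalgebra R A} {G : Type*} [Group G] [DistribMulAction G A]
  [IsScalarTower G A A]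

theorem NormLE.smul {m n : A} (h : NormLE B m n) (g : G) : NormLE B (g • m) (g • n) :=
  let ⟨e, he, hm⟩ := h
  ⟨e, he, by rw [hm, smul_mul_assoc]⟩

variable [SMulCommClass G A A]

theorem IsDagger.smul {n k : A} (h : IsDagger B n k) (g : G) :
    IsDagger B (g • n) (g⁻¹ • k) := by
  obtain ⟨hknk, hnkn, hconj⟩ := h
  refine ⟨?_, ?_, fun b hb => ?_⟩
  · rw [smul_mul_smul_comm, inv_mul_cancel, one_smul, mul_smul_comm, hknk]
  · rw [smul_mul_smul_comm, mul_inv_cancel, one_smul, mul_smul_comm, hnkn]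
  · rw [smul_mul_assoc, smul_mul_smul_comm, inv_mul_cancel, one_smul,
      smul_mul_assoc, smul_mul_smul_comm, mul_inv_cancel, one_smul]
    exact hconj b hb

theorem MemNormaliser.smul {n : A} (h : MemNormaliser B n) (g : G) :
    MemNormaliser B (g • n) :=
  let ⟨k, hk⟩ := h
  ⟨g⁻¹ • k, hk.smul g⟩

theorem IsFilterOf.smul_set {U : Set A} (hU : IsFilterOf B U) (g : G) :
    IsFilterOf B (g • U) := by
  obtain ⟨hnorm, hzero, hup, hdir⟩ := hU
  refine ⟨?_, ?_, ?_, ?_⟩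
  · rintro _ ⟨m, hm, rfl⟩
    exact (hnorm m hm).smul g
  · rw [Set.mem_smul_set_iff_inv_smul_mem, smul_zero]
    exact hzero
  · intro m hm n hn hmn
    rw [Set.mem_smul_set_iff_inv_smul_mem] at hm ⊢
    exact hup _ hm _ (hn.smul g⁻¹) (hmn.smul g⁻¹)
  · rintro _ ⟨m, hm, rfl⟩ _ ⟨n, hn, rfl⟩
    obtain ⟨p, hp, hpm, hpn⟩ := hdir m hm n hn
    exact ⟨g • p, Set.smul_mem_smul_set hp, hpm.smul g, hpn.smul g⟩

theorem IsUltrafilterOf.smul_set {U : Set A} (hU : IsUltrafilterOf B U) (g : G) :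
    IsUltrafilterOf B (g • U) := by
  refine ⟨hU.1.smul_set g, fun V hV hUV => ?_⟩
  have hU_eq : U = g⁻¹ • V :=
    hU.2 _ (hV.smul_set g⁻¹) (Set.smul_set_subset_iff_subset_inv_smul_set.mp hUV)
  rw [hU_eq, smul_inv_smul]

end QCP

theorem ultrafilter_smul_general {R : Type*} [CommRing R] {A : Type*} [NonUnitalRing A]
    [Module R A] [SMulCommClass R A A] [IsScalarTower R A A]
    (B : NonUnitalSubalgebra R A)
    (U : Set A) (hU : QCP.IsUltrafilterOf B U) (t : Rˣ) :
    QCP.IsUltrafilterOf B ((fun m => (t : R) • m) '' U) := by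
  simpa only [← Units.smul_def, Set.image_smul] using hU.smul_set t

/-- the scalar translate of an ultrafilter of `N(B)` by a unit of `R`
is again an ultrafilter of `N(B)`. -/
theorem ultrafilter_smul {R : Type*} [CommRing R] {A : Type*} [NonUnitalRing A]
    [Module R A] [SMulCommClass R A A] [IsScalarTower R A A]
    (B : NonUnitalSubalgebra R A)
    (hcomm : ∀ x ∈ B, ∀ y ∈ B, x * y = y * x)
    (hWT : QCP.CondWT B)
    (hlu : QCP.HasLocalUnits B)
    (U : Set A) (hU : QCP.IsUltrafilterOf B U) (t : Rˣ) :
    QCP.IsUltrafilterOf B ((fun m => (t : R) • m) '' U) :=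
  ultrafilter_smul_general B U hU t
end

section
/- Suppose that B satisfies condition (WT) and that I(B) is a set of local units for A. If t is a unit of R with t ≠ 1 and n ∈ N(B), then no ultrafilter of N(B) contains both n and t•n. -/
namespace QCP

variable {R : Type*} [CommRing R] {A : Type*} [NonUnitalRing A] [Module R A]
  {B : NonUnitalSubalgebra R A}

theorem NormLE.mul_eq_self {p m : A} (h : NormLE B p m) : ∃ e, IsIdem B e ∧ p * e = p := by
  obtain ⟨e, he, rfl⟩ := h
  exact ⟨e, he, IsIdempotentElem.mul_mul_self he.2 m⟩

theorem NormLE.smul_eq_self_of_smul [IsScalarTower R A A]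
    (hcomm : ∀ x ∈ B, ∀ y ∈ B, x * y = y * x) {p n : A} {s : R}
    (h₁ : NormLE B p n) (h₂ : NormLE B p (s • n)) : s • p = p := by
  obtain ⟨e, he, hpe⟩ := h₁
  obtain ⟨f, hf, hpf⟩ := h₂
  have hpf' : p * f = p := by rw [hpf, IsIdempotentElem.mul_mul_self hf.2]
  have hp : p = n * (e * f) := by rw [← mul_assoc, ← hpe, hpf']
  calc s • p = s • (n * (f * e)) := by rw [hp, hcomm e he.1 f hf.1]
    _ = p * e := by rw [← mul_assoc, ← smul_mul_assoc, ← smul_mul_assoc, ← hpf]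
    _ = p := by rw [hpe, IsIdempotentElem.mul_mul_self he.2]

theorem IsDagger.isIdem_mul_of_normLE {p k m : A} (hk : IsDagger B p k) (hpm : NormLE B p m) :
    IsIdem B (p * k) := by
  obtain ⟨e, he, hpe⟩ := hpm.mul_eq_self
  refine ⟨?_, ?_⟩
  · simpa only [hpe] using (hk.2.2 e he.1).2
  · rw [← mul_assoc, hk.2.1]

theorem CondWT.eq_zero_or_eq_zero_of_smul_eq_zero [IsScalarTower R A A] (hWT : CondWT B)
    {p k : A} (hpkp : p * k * p = p) (hpk : IsIdem B (p * k)) {s : R} (h : s • p = 0) :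
    s = 0 ∨ p = 0 := by
  have hspk : s • (p * k) = 0 := by rw [← smul_mul_assoc, h, zero_mul]
  refine (hWT _ hpk.1 hpk.2 s hspk).imp_right fun hpk0 => ?_
  rw [← hpkp, hpk0, zero_mul]

end QCP

theorem ultrafilter_not_mem_smul_general {R : Type*} [CommRing R] {A : Type*} [NonUnitalRing A]
    [Module R A] [IsScalarTower R A A]
    (B : NonUnitalSubalgebra R A)
    (hcomm : ∀ x ∈ B, ∀ y ∈ B, x * y = y * x)
    (hWT : QCP.CondWT B)
    (t : Rˣ) (ht : (t : R) ≠ 1) (n : A)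
    (U : Set A) (hU : QCP.IsUltrafilterOf B U) :
    ¬(n ∈ U ∧ (t : R) • n ∈ U) := by
  rintro ⟨hnU, htnU⟩
  obtain ⟨⟨hNorm, h0, -, hdir⟩, -⟩ := hU
  obtain ⟨p, hpU, hpn, hptn⟩ := hdir n hnU _ htnU
  obtain ⟨k, hk⟩ := hNorm p hpU
  have hfix : (t : R) • p = p := hpn.smul_eq_self_of_smul hcomm hptn
  have hsmul : (1 - (t : R)) • p = 0 := by rw [sub_smul, one_smul, hfix, sub_self]
  rcases hWT.eq_zero_or_eq_zero_of_smul_eq_zero hk.2.1 (hk.isIdem_mul_of_normLE hpn) hsmul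
    with h | h
  · exact ht (sub_eq_zero.mp h).symm
  · exact h0 (h ▸ hpU)

/-- if `t ∈ Rˣ` with `t ≠ 1`, no ultrafilter of `N(B)` contains both
`n` and `t•n`. -/
theorem ultrafilter_not_mem_smul {R : Type*} [CommRing R] {A : Type*} [NonUnitalRing A]
    [Module R A] [SMulCommClass R A A] [IsScalarTower R A A]
    (B : NonUnitalSubalgebra R A)
    (hcomm : ∀ x ∈ B, ∀ y ∈ B, x * y = y * x)
    (hWT : QCP.CondWT B)
    (hlu : QCP.HasLocalUnits B)
    (t : Rˣ) (ht : (t : R) ≠ 1) (n : A) (hn : QCP.MemNormaliser B n)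
    (U : Set A) (hU : QCP.IsUltrafilterOf B U) :
    ¬(n ∈ U ∧ (t : R) • n ∈ U) :=
  ultrafilter_not_mem_smul_general B hcomm hWT t ht n U hU
end

section
/- Suppose that B satisfies condition (WT) and that I(B) is a set of local units for A. If U and W are ultrafilters of N(B) each containing at least one element of I(B), and t, s are units of R with {t•m : m ∈ U} = {s•m : m ∈ W}, then t = s and U = W. -/
/-! Pick an idempotent `e ∈ U` and write `t • e = s • w` with `w ∈ W`, so `w = d • e` for the
unit `d = s⁻¹ t`. Since `W` also contains an idempotent, `w` has a lower bound `p = d • q` in `W`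
which is idempotent, where `q = e e'` is an idempotent of `B`, nonzero because `0 ∉ W`. Then
`(d² - d) • q = 0`, so (WT) forces `d² = d`, i.e. `d = 1`. Hence `t = s`, and `U = W` because
scaling by a unit is injective. -/

namespace QCP

variable {R : Type*} [CommRing R] {A : Type*} [NonUnitalRing A] [Module R A]
  {B : NonUnitalSubalgebra R A}

theorem IsIdem.mul_s9 (hcomm : ∀ x ∈ B, ∀ y ∈ B, x * y = y * x) {e f : A}
    (he : IsIdem B e) (hf : IsIdem B f) : IsIdem B (e * f) :=
  ⟨B.mul_mem he.1 hf.1, IsIdempotentElem.mul_of_commute (hcomm e he.1 f hf.1) he.2 hf.2⟩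

theorem CondWT.smul_left_cancel (hWT : CondWT B) {q : A} (hq : IsIdem B q) (hq0 : q ≠ 0)
    {a b : R} (h : a • q = b • q) : a = b := by
  have hsub : (a - b) • q = 0 := by rw [sub_smul, h, sub_self]
  exact sub_eq_zero.mp ((hWT q hq.1 hq.2 _ hsub).resolve_right hq0)

theorem CondWT.eq_one_of_smul_mul_self [SMulCommClass R A A] [IsScalarTower R A A]
    (hWT : CondWT B) {q : A} (hq : IsIdem B q) {d : R} (hd : IsUnit d)
    (hdq : (d • q) * (d • q) = d • q) (hdq0 : d • q ≠ 0) : d = 1 := by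
  have hq0 : q ≠ 0 := by rintro rfl; exact hdq0 (smul_zero d)
  rw [smul_mul_smul_comm, hq.2] at hdq
  exact hd.mul_eq_right.mp (hWT.smul_left_cancel hq hq0 hdq)

theorem IsFilterOf.exists_idem_mul_mem {W : Set A} (hW : IsFilterOf B W)
    (hcomm : ∀ x ∈ B, ∀ y ∈ B, x * y = y * x) {f : A} (hfW : f ∈ W) (hf : IsIdem B f)
    {w : A} (hwW : w ∈ W) : ∃ e, IsIdem B e ∧ w * e ∈ W ∧ (w * e) * (w * e) = w * e := by
  obtain ⟨p, hpW, ⟨e, he, rfl⟩, ⟨e', he', hp⟩⟩ := hW.2.2.2 w hwW f hfW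
  exact ⟨e, he, hpW, hp ▸ (hf.mul_s9 hcomm he').2⟩

theorem IsFilterOf.eq_one_of_smul_mem [SMulCommClass R A A] [IsScalarTower R A A]
    {W : Set A} (hW : IsFilterOf B W) (hcomm : ∀ x ∈ B, ∀ y ∈ B, x * y = y * x)
    (hWT : CondWT B) {f : A} (hfW : f ∈ W) (hf : IsIdem B f) {e : A} (he : IsIdem B e)
    {d : R} (hd : IsUnit d) (hdeW : d • e ∈ W) : d = 1 := by
  obtain ⟨e', he', hpW, hpp⟩ := hW.exists_idem_mul_mem hcomm hfW hf hdeW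
  rw [smul_mul_assoc] at hpW hpp
  exact hWT.eq_one_of_smul_mul_self (he.mul_s9 hcomm he') hd hpp fun h0 => hW.2.1 (h0 ▸ hpW)

end QCP

theorem unit_ultrafilter_smul_eq_general {R : Type*} [CommRing R] {A : Type*} [NonUnitalRing A]
    [Module R A] [SMulCommClass R A A] [IsScalarTower R A A]
    (B : NonUnitalSubalgebra R A)
    (hcomm : ∀ x ∈ B, ∀ y ∈ B, x * y = y * x)
    (hWT : QCP.CondWT B)
    (U W : Set A) (hW : QCP.IsUltrafilterOf B W)
    (hUe : ∃ e ∈ U, QCP.IsIdem B e) (hWe : ∃ e ∈ W, QCP.IsIdem B e)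
    (t s : Rˣ)
    (himg : (fun m => (t : R) • m) '' U = (fun m => (s : R) • m) '' W) :
    t = s ∧ U = W := by
  obtain ⟨e, heU, he⟩ := hUe
  obtain ⟨f, hfW, hf⟩ := hWe
  obtain ⟨w, hwW, hw⟩ : (t : R) • e ∈ (fun m => (s : R) • m) '' W := himg ▸ ⟨e, heU, rfl⟩
  have hwe : w = (s⁻¹ * t) • e := by
    rw [mul_smul, Units.smul_def t, ← hw]
    exact (inv_smul_smul s w).symm
  have hst : s⁻¹ * t = 1 :=
    Units.ext (hW.1.eq_one_of_smul_mem hcomm hWT hfW hf he (Units.isUnit _) (hwe ▸ hwW))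
  obtain rfl := (inv_mul_eq_one.mp hst).symm
  refine ⟨rfl, (MulAction.injective t).image_injective ?_⟩
  simpa only [Units.smul_def] using himg

/-- unit-space ultrafilters with equal scalar translates are equal,
with equal scalars. -/
theorem unit_ultrafilter_smul_eq {R : Type*} [CommRing R] {A : Type*} [NonUnitalRing A]
    [Module R A] [SMulCommClass R A A] [IsScalarTower R A A]
    (B : NonUnitalSubalgebra R A)
    (hcomm : ∀ x ∈ B, ∀ y ∈ B, x * y = y * x)
    (hWT : QCP.CondWT B)
    (hlu : QCP.HasLocalUnits B)
    (U W : Set A) (hU : QCP.IsUltrafilterOf B U) (hW : QCP.IsUltrafilterOf B W)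
    (hUe : ∃ e ∈ U, QCP.IsIdem B e) (hWe : ∃ e ∈ W, QCP.IsIdem B e)
    (t s : Rˣ)
    (himg : (fun m => (t : R) • m) '' U = (fun m => (s : R) • m) '' W) :
    t = s ∧ U = W :=
  unit_ultrafilter_smul_eq_general B hcomm hWT U W hW hUe hWe t s himg
end

section
/- Every algebraic diagonal pair is an algebraic Cartan pair: if (A,B) is an algebraic diagonal pair, then B is a maximal commutative subalgebra of A, i.e. every a ∈ A that commutes with every element of B belongs to B. -/
/-! Let `a` commute with `B` and put `c := a - P a`, so that `c` commutes with `B` and `P c = 0`.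
For a free normaliser `n` we get `P (n c) = 0`: if `n ∈ B` this is `n P c`, and if `n² = 0`, the
idempotent `f := n n† ∈ B` satisfies `f P(n c) = P(f n c) = P(n c)` while
`P(n c) f = P(n f c) = P(n² n† c) = 0`, and `B` is commutative. As free normalisers span `A`,
`P (x c) = 0` for every `x`, so `c = 0` by faithfulness and `a = P a ∈ B`. -/

namespace QCP

variable {R : Type*} [CommRing R] {A : Type*} [NonUnitalRing A] [Module R A]
  {B : NonUnitalSubalgebra R A} {P : A →ₗ[R] A}

theorem IsCondExp.map_mul_left (hB : HasLocalUnits B) (hP : IsCondExp B P) {b : A} (hb : b ∈ B)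
    (x : A) : P (b * x) = b * P x := by
  classical
  obtain ⟨e, ⟨he, -⟩, hunit⟩ := hB {x, P x}
  calc P (b * x) = P (b * x * e) := by rw [mul_assoc, (hunit x (by simp)).2]
    _ = b * P x * e := hP.2.2 x b hb e he
    _ = b * P x := by rw [mul_assoc, (hunit (P x) (by simp)).2]

theorem IsCondExp.map_mul_right (hB : HasLocalUnits B) (hP : IsCondExp B P) {b : A} (hb : b ∈ B)
    (x : A) : P (x * b) = P x * b := by
  classical
  obtain ⟨e, ⟨he, -⟩, hunit⟩ := hB {x, P x}
  calc P (x * b) = P (e * x * b) := by rw [(hunit x (by simp)).1]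
    _ = e * P x * b := hP.2.2 x e he b hb
    _ = P x * b := by rw [(hunit (P x) (by simp)).1]

theorem IsDagger.mul_mem (hB : HasLocalUnits B) {n k : A} (h : IsDagger B n k) : n * k ∈ B := by
  obtain ⟨e, ⟨he, -⟩, hunit⟩ := hB {n}
  simpa [(hunit n (by simp)).2] using (h.2.2 e he).2

theorem IsCondExp.map_mul_eq_zero_of_mul_self_eq_zero (hB : HasLocalUnits B)
    (hBcomm : ∀ x ∈ B, ∀ y ∈ B, x * y = y * x) (hP : IsCondExp B P) {c : A}
    (hc : ∀ b ∈ B, c * b = b * c) {n k : A} (hnk : IsDagger B n k) (hn : n * n = 0) :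
    P (n * c) = 0 := by
  have hf : n * k ∈ B := hnk.mul_mem hB
  calc P (n * c) = n * k * P (n * c) := by
        rw [← hP.map_mul_left hB hf, ← mul_assoc, hnk.2.1]
    _ = P (n * c) * (n * k) := hBcomm _ hf _ (hP.1 _)
    _ = 0 := by
        rw [← hP.map_mul_right hB hf, mul_assoc, hc _ hf, ← mul_assoc, ← mul_assoc, hn,
          zero_mul, zero_mul, map_zero]

theorem IsCondExp.map_mul_eq_zero_of_isFreeNormaliser (hB : HasLocalUnits B)
    (hBcomm : ∀ x ∈ B, ∀ y ∈ B, x * y = y * x) (hP : IsCondExp B P) {c : A}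
    (hc : ∀ b ∈ B, c * b = b * c) (hPc : P c = 0) {n : A} (hn : IsFreeNormaliser B n) :
    P (n * c) = 0 := by
  obtain ⟨⟨k, hnk⟩, hnB | hn⟩ := hn
  · rw [hP.map_mul_left hB hnB, hPc, mul_zero]
  · exact hP.map_mul_eq_zero_of_mul_self_eq_zero hB hBcomm hc hnk hn

theorem IsDiagonalPair.eq_zero_of_commute [IsScalarTower R A A] (hD : IsDiagonalPair B)
    (hP : IsCondExp B P) (hF : IsFaithful B P) {c : A} (hc : ∀ b ∈ B, c * b = b * c)
    (hPc : P c = 0) : c = 0 := by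
  obtain ⟨⟨hBcomm, -, hB, -⟩, hspan⟩ := hD
  have hvanish : P ∘ₗ LinearMap.mulRight R c = 0 :=
    LinearMap.ext_on hspan fun n hn =>
      hP.map_mul_eq_zero_of_isFreeNormaliser hB hBcomm hc hPc hn
  by_contra hc0
  obtain ⟨n, -, hn⟩ := hF c hc0
  exact hn (LinearMap.congr_fun hvanish n)

end QCP

theorem diagonal_pair_is_cartan_pair_general {R : Type*} [CommRing R] {A : Type*} [NonUnitalRing A]
    [Module R A] [IsScalarTower R A A]
    (B : NonUnitalSubalgebra R A)
    (hD : QCP.IsDiagonalPair B) :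
    QCP.IsCartanPair B := by
  refine ⟨hD.1, fun a ha => ?_⟩
  obtain ⟨hBcomm, -, -, -, -, P, hP, hF⟩ := hD.1
  have hc : ∀ b ∈ B, (a - P a) * b = b * (a - P a) := fun b hb =>
    Commute.sub_left (ha b hb) (hBcomm _ (hP.1 a) b hb)
  have hPc : P (a - P a) = 0 := by rw [map_sub, hP.2.1 _ (hP.1 a), sub_self]
  rw [sub_eq_zero.mp (hD.eq_zero_of_commute hP hF hc hPc)]
  exact hP.1 a

/-- every algebraic diagonal pair is an algebraic Cartan pair. -/
theorem diagonal_pair_is_cartan_pair {R : Type*} [CommRing R] {A : Type*} [NonUnitalRing A]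
    [Module R A] [SMulCommClass R A A] [IsScalarTower R A A]
    (B : NonUnitalSubalgebra R A)
    (hD : QCP.IsDiagonalPair B) :
    QCP.IsCartanPair B :=
  diagonal_pair_is_cartan_pair_general B hD
end

section
/- Let (A,B) be an algebraic quasi-Cartan pair. Suppose n ∈ N(B) ∩ B can be written as n = Σᵢ₌₁ᵏ tᵢ•eᵢ where e₁, …, e_k ∈ I(B) are nonzero pairwise orthogonal idempotents (eᵢ·eⱼ = 0 for i ≠ j) and t₁, …, t_k ∈ R are all nonzero. Then each tᵢ is a unit of R. -/
/-!
Multiplying `n` by `eᵢ` on either side gives `eᵢ n = n eᵢ = tᵢ eᵢ`. If `d` is a dagger for `n`,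
then `y = tᵢ (eᵢ d eᵢ)` is an idempotent of `B` below `eᵢ` with `tᵢ y = tᵢ eᵢ`, so (WT) applied
to `eᵢ - y` forces `eᵢ = tᵢ (eᵢ d eᵢ)`; applying the conditional expectation, `eᵢ = tᵢ b` for
some `b ∈ B`. Every element of the span of `I(B)` acts as a scalar `s` on some nonzero
idempotent `g ≤ eᵢ`, and then `(tᵢ s - 1) g = 0`, so `tᵢ s = 1` by (WT).
-/

namespace QCP

theorem mul_sum_smul_of_orthogonal {R A ι : Type*} [NonUnitalNonAssocSemiring A]
    [SMulZeroClass R A] [SMulCommClass R A A] [Fintype ι] (t : ι → R) (e : ι → A)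
    (horth : ∀ i j, i ≠ j → e i * e j = 0) (i : ι) (hi : e i * e i = e i) :
    e i * ∑ j, t j • e j = t i • e i := by
  rw [Finset.mul_sum, Finset.sum_eq_single i (fun j _ hji => by
    rw [mul_smul_comm, horth i j hji.symm, smul_zero]) (by simp), mul_smul_comm, hi]

theorem sum_smul_mul_of_orthogonal {R A ι : Type*} [NonUnitalNonAssocSemiring A]
    [SMulZeroClass R A] [IsScalarTower R A A] [Fintype ι] (t : ι → R) (e : ι → A)
    (horth : ∀ i j, i ≠ j → e i * e j = 0) (i : ι) (hi : e i * e i = e i) :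
    (∑ j, t j • e j) * e i = t i • e i := by
  rw [Finset.sum_mul, Finset.sum_eq_single i (fun j _ hji => by
    rw [smul_mul_assoc, horth j i hji, smul_zero]) (by simp), smul_mul_assoc, hi]

variable {R : Type*} [CommRing R] {A : Type*} [NonUnitalRing A] [Module R A]
  {B : NonUnitalSubalgebra R A}

theorem CondWT.eq_of_smul_eq (hWT : CondWT B) {e y : A} (he : IsIdem B e) (hy : IsIdem B y)
    (hey : e * y = y) (hye : y * e = y) {t : R} (ht : t ≠ 0) (h : t • y = t • e) : y = e := by
  have hidem : (e - y) * (e - y) = e - y := by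
    rw [sub_mul, mul_sub, mul_sub, he.2, hey, hye, hy.2, sub_self, sub_zero]
  have htorsion : t • (e - y) = 0 := by rw [smul_sub, h, sub_self]
  rcases hWT _ (sub_mem he.1 hy.1) hidem t htorsion with h0 | h0
  · exact absurd h0 ht
  · exact (sub_eq_zero.mp h0).symm

theorem smul_corner_mem [IsScalarTower R A A] {n d e : A} {t : R} (hd : IsDagger B n d)
    (he : IsIdem B e) (hne : n * e = t • e) : t • (e * d * e) ∈ B := by
  have h : n * e * d * e ∈ B := mul_mem (hd.2.2 e he.1).2 he.1
  rwa [hne, smul_mul_assoc, smul_mul_assoc] at h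

theorem smul_smul_corner [SMulCommClass R A A] [IsScalarTower R A A] {n d e : A} {t : R}
    (hd : IsDagger B n d) (he : IsIdem B e) (hen : e * n = t • e) (hne : n * e = t • e) :
    t • t • (e * d * e) = t • e := by
  have h : e * (n * d * n) * e = e * n * e := by rw [hd.2.1]
  rwa [show e * (n * d * n) * e = (e * n) * d * (n * e) by simp only [mul_assoc], hen, hne,
    smul_mul_assoc, smul_mul_assoc, mul_smul_comm, smul_mul_assoc, he.2] at h

theorem eq_smul_corner [SMulCommClass R A A] [IsScalarTower R A A] (hWT : CondWT B)
    {n d e : A} {t : R} (hd : IsDagger B n d) (he : IsIdem B e) (hen : e * n = t • e)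
    (hne : n * e = t • e) (ht : t ≠ 0) : e = t • (e * d * e) := by
  have hleft : e * (e * d * e) = e * d * e := by rw [← mul_assoc, ← mul_assoc, he.2]
  have hright : e * d * e * e = e * d * e := by rw [mul_assoc, he.2]
  have hsq := smul_smul_corner hd he hen hne
  have hidem : t • (e * d * e) * t • (e * d * e) = t • (e * d * e) := by
    rw [smul_mul_assoc, mul_smul_comm, ← smul_mul_assoc, ← smul_mul_assoc, hsq, smul_mul_assoc,
      hleft]
  refine (hWT.eq_of_smul_eq he ⟨smul_corner_mem hd he hne, hidem⟩ ?_ ?_ ht hsq).symm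
  · rw [mul_smul_comm, hleft]
  · rw [smul_mul_assoc, hright]

theorem exists_idem_mul_eq_smul_of_mem_span [IsScalarTower R A A]
    (hcomm : ∀ x ∈ B, ∀ y ∈ B, x * y = y * x) {b : A}
    (hb : b ∈ Submodule.span R {e : A | IsIdem B e}) (g : A) (hg : IsIdem B g) (hg0 : g ≠ 0) :
    ∃ (g' : A) (s : R), IsIdem B g' ∧ g' ≠ 0 ∧ g * g' = g' ∧ b * g' = s • g' := by
  induction hb using Submodule.span_induction generalizing g with
  | mem f hf =>
    by_cases hfg : f * g = 0
    · exact ⟨g, 0, hg, hg0, hg.2, by rw [hfg, zero_smul]⟩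
    have hgf := hcomm g hg.1 f hf.1
    refine ⟨f * g, 1, ⟨mul_mem hf.1 hg.1, ?_⟩, hfg, ?_, ?_⟩
    · rw [mul_assoc, ← mul_assoc g, hgf, mul_assoc, hg.2, ← mul_assoc, hf.2]
    · rw [← mul_assoc, hgf, mul_assoc, hg.2]
    · rw [← mul_assoc, hf.2, one_smul]
  | zero => exact ⟨g, 0, hg, hg0, hg.2, by rw [zero_mul, zero_smul]⟩
  | add b₁ b₂ _ _ ih₁ ih₂ =>
    obtain ⟨g₁, s₁, hg₁, hg₁0, hgg₁, hb₁⟩ := ih₁ g hg hg0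
    obtain ⟨g₂, s₂, hg₂, hg₂0, hg₁g₂, hb₂⟩ := ih₂ g₁ hg₁ hg₁0
    refine ⟨g₂, s₁ + s₂, hg₂, hg₂0, by rw [← hg₁g₂, ← mul_assoc, hgg₁], ?_⟩
    rw [add_mul, hb₂, ← hg₁g₂, ← mul_assoc, hb₁, smul_mul_assoc, hg₁g₂, add_smul]
  | smul c b _ ih =>
    obtain ⟨g', s, hg', hg'0, hgg', hb⟩ := ih g hg hg0
    exact ⟨g', c * s, hg', hg'0, hgg', by rw [smul_mul_assoc, hb, smul_smul]⟩

theorem isUnit_of_smul_eq_idem [IsScalarTower R A A] (hcomm : ∀ x ∈ B, ∀ y ∈ B, x * y = y * x)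
    (hWT : CondWT B) {b e : A} (hb : b ∈ Submodule.span R {e : A | IsIdem B e})
    (he : IsIdem B e) (he0 : e ≠ 0) {t : R} (h : t • b = e) : IsUnit t := by
  obtain ⟨g, s, hg, hg0, heg, hbg⟩ := exists_idem_mul_eq_smul_of_mem_span hcomm hb e he he0
  have htorsion : (t * s - 1) • g = 0 := by
    rw [sub_smul, one_smul, mul_smul, ← hbg, ← smul_mul_assoc, h, heg, sub_self]
  rcases hWT g hg.1 hg.2 _ htorsion with h0 | h0
  · exact .of_mul_eq_one s (sub_eq_zero.mp h0)
  · exact absurd h0 hg0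

end QCP

theorem coefficients_are_units_general {R : Type*} [CommRing R] {A : Type*}
    [NonUnitalRing A] [Module R A] [SMulCommClass R A A] [IsScalarTower R A A]
    (B : NonUnitalSubalgebra R A)
    (hQC : QCP.IsQuasiCartanPair B)
    (n : A) (hnN : QCP.MemNormaliser B n)
    (k : ℕ) (t : Fin k → R) (e : Fin k → A)
    (he : ∀ i, QCP.IsIdem B (e i)) (he0 : ∀ i, e i ≠ 0)
    (horth : ∀ i j, i ≠ j → e i * e j = 0)
    (ht : ∀ i, t i ≠ 0)
    (hsum : n = ∑ i, t i • e i) :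
    ∀ i, IsUnit (t i) := by
  intro i
  obtain ⟨⟨hcomm, hWT, -, hspan, -, -⟩, P, ⟨hPmem, hPfix, -⟩, -, -⟩ := hQC
  obtain ⟨d, hd⟩ := hnN
  have hen : e i * n = t i • e i := hsum ▸ QCP.mul_sum_smul_of_orthogonal t e horth i (he i).2
  have hne : n * e i = t i • e i := hsum ▸ QCP.sum_smul_mul_of_orthogonal t e horth i (he i).2
  have hcorner := QCP.eq_smul_corner hWT hd (he i) hen hne (ht i)
  have hb : t i • P (e i * d * e i) = e i := by
    rw [← map_smul, ← hcorner, hPfix _ (he i).1]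
  have hPspan : P (e i * d * e i) ∈ Submodule.span R {e : A | QCP.IsIdem B e} :=
    SetLike.mem_coe.mp (hspan ▸ hPmem _)
  exact QCP.isUnit_of_smul_eq_idem hcomm hWT hPspan (he i) (he0 i) hb

/-- in a quasi-Cartan pair, if `n ∈ N(B) ∩ B` is written as a combination of
nonzero pairwise orthogonal idempotents with nonzero coefficients, then each coefficient
is a unit of `R`. -/
theorem coefficients_are_units {R : Type*} [CommRing R] {A : Type*}
    [NonUnitalRing A] [Module R A] [SMulCommClass R A A] [IsScalarTower R A A]
    (B : NonUnitalSubalgebra R A)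
    (hQC : QCP.IsQuasiCartanPair B)
    (n : A) (hnN : QCP.MemNormaliser B n) (hnB : n ∈ B)
    (k : ℕ) (t : Fin k → R) (e : Fin k → A)
    (he : ∀ i, QCP.IsIdem B (e i)) (he0 : ∀ i, e i ≠ 0)
    (horth : ∀ i j, i ≠ j → e i * e j = 0)
    (ht : ∀ i, t i ≠ 0)
    (hsum : n = ∑ i, t i • e i) :
    ∀ i, IsUnit (t i) :=
  coefficients_are_units_general B hQC n hnN k t e he he0 horth ht hsum
end

section
/- Let G be a group satisfying the unique product property, let R be a unital integral domain, and let c be a normalised Rˣ-valued 2-cocycle on G. Then the only units of the twisted group ring R(G,c) are the trivial ones: if a, b are finitely supported functions G → R with a*b = b*a = δ₁ (where * is the c-twisted convolution), then a = t•δ_g for some t ∈ Rˣ and g ∈ G. -/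
/-- The twisted convolution product on the twisted group ring `R(G,c)` of finitely
supported functions `G →₀ R`: `(f*g)(β) = ∑_α c(α, α⁻¹β)·f(α)·g(α⁻¹β)`, i.e.
`f*g = ∑_{α,β} c(α,β)·f(α)·g(β)·δ_{αβ}`. -/
noncomputable def twistedMul {G : Type*} [Group G] {R : Type*} [CommRing R]
    (c : G → G → Rˣ) (f g : G →₀ R) : G →₀ R :=
  f.sum fun α r => g.sum fun β s => Finsupp.single (α * β) ((c α β : R) * r * s)

/-- `c` is a 2-cocycle on `G` with values in `Rˣ`. -/
def IsTwoCocycle {G : Type*} [Group G] {R : Type*} [CommRing R] (c : G → G → Rˣ) : Prop :=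
  ∀ α β γ : G, c α β * c (α * β) γ = c α (β * γ) * c β γ

/-- `c` is normalised. -/
def IsNormalised {G : Type*} [Group G] {R : Type*} [CommRing R] (c : G → G → Rˣ) : Prop :=
  ∀ γ : G, c 1 γ = 1 ∧ c γ 1 = 1


/-!
Since `G` has unique products it has two of them, and for a unique product `s * t` of the
supports of `a` and `b` the coefficient of `a * b` at `s * t` is `c(s,t) a(s) b(t) ≠ 0`.
If `a * b = δ₁`, every unique product therefore equals `1`, so two distinct unique products
cannot exist: both supports are singletons, `a = r • δ_g`, `b = s • δ_h` and `c(g,h) r s = 1`.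
-/

namespace TwistedGroupRing

open scoped Finset

variable {G : Type*} [Group G] {R : Type*} [CommRing R] (c : G → G → Rˣ)

lemma twistedMul_apply [DecidableEq G] (f g : G →₀ R) (x : G) :
    twistedMul c f g x = ∑ α ∈ f.support, ∑ β ∈ g.support,
      if α * β = x then (c α β : R) * f α * g β else 0 := by
  simp only [twistedMul, Finsupp.sum, Finsupp.finsetSum_apply, Finsupp.single_apply]

lemma twistedMul_apply_mul_of_uniqueMul [DecidableEq G] {f g : G →₀ R} {s t : G}
    (hs : s ∈ f.support) (ht : t ∈ g.support) (hu : UniqueMul f.support g.support s t) :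
    twistedMul c f g (s * t) = (c s t : R) * f s * g t := by
  rw [twistedMul_apply, Finset.sum_eq_single_of_mem s hs, Finset.sum_eq_single_of_mem t ht,
    if_pos rfl]
  · exact fun β hβ hne => if_neg fun h => hne (hu hs hβ h).2
  · exact fun α hα hne => Finset.sum_eq_zero fun β hβ => if_neg fun h => hne (hu hα hβ h).1

@[simp]
lemma twistedMul_zero_left (g : G →₀ R) : twistedMul c 0 g = 0 := by
  simp [twistedMul]

@[simp]
lemma twistedMul_zero_right (f : G →₀ R) : twistedMul c f 0 = 0 := by
  simp [twistedMul]

@[simp]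
lemma twistedMul_single_single (g h : G) (r s : R) :
    twistedMul c (Finsupp.single g r) (Finsupp.single h s) =
      Finsupp.single (g * h) ((c g h : R) * r * s) := by
  simp [twistedMul, Finsupp.sum_single_index]

variable [NoZeroDivisors R] [Nontrivial R] {c} {a b : G →₀ R}

lemma mul_eq_one_of_uniqueMul (hab : twistedMul c a b = Finsupp.single 1 1) {s t : G}
    (hs : s ∈ a.support) (ht : t ∈ b.support) (hu : UniqueMul a.support b.support s t) :
    s * t = 1 := by
  classical
  have hne : twistedMul c a b (s * t) ≠ 0 := by
    rw [twistedMul_apply_mul_of_uniqueMul c hs ht hu]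
    exact mul_ne_zero (mul_ne_zero (c s t).ne_zero (Finsupp.mem_support_iff.1 hs))
      (Finsupp.mem_support_iff.1 ht)
  rw [hab] at hne
  by_contra h
  exact hne (Finsupp.single_eq_of_ne h)

lemma card_support_mul_card_support_eq_one [TwoUniqueProds G]
    (hab : twistedMul c a b = Finsupp.single 1 1) : #a.support * #b.support = 1 := by
  have ha : a ≠ 0 := by rintro rfl; simp [eq_comm] at hab
  have hb : b ≠ 0 := by rintro rfl; simp [eq_comm] at hab
  refine le_antisymm (not_lt.1 fun hlt => ?_) (Nat.mul_pos
    (Finset.card_pos.2 (Finsupp.support_nonempty_iff.2 ha))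
    (Finset.card_pos.2 (Finsupp.support_nonempty_iff.2 hb)))
  obtain ⟨p, hp, q, hq, hpq, hup, huq⟩ := TwoUniqueProds.uniqueMul_of_one_lt_card hlt
  rw [Finset.mem_product] at hp hq
  have hpq_mul : q.1 * q.2 = p.1 * p.2 :=
    (mul_eq_one_of_uniqueMul hab hq.1 hq.2 huq).trans
      (mul_eq_one_of_uniqueMul hab hp.1 hp.2 hup).symm
  exact hpq (Prod.ext_iff.2 (hup hq.1 hq.2 hpq_mul)).symm

end TwistedGroupRing

theorem twisted_group_ring_units_trivial_general {G : Type*} [Group G] [UniqueProds G]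
    {R : Type*} [CommRing R] [IsDomain R]
    (c : G → G → Rˣ)
    (a b : G →₀ R)
    (hab : twistedMul c a b = Finsupp.single 1 1) :
    ∃ (t : Rˣ) (g : G), a = Finsupp.single g (t : R) := by
  have : TwoUniqueProds G := UniqueProds.toTwoUniqueProds_of_group
  have hcard := TwistedGroupRing.card_support_mul_card_support_eq_one hab
  obtain ⟨g, r, -, rfl⟩ := Finsupp.card_support_eq_one'.1 (Nat.eq_one_of_mul_eq_one_right hcard)
  obtain ⟨h, s, -, rfl⟩ := Finsupp.card_support_eq_one'.1 (Nat.eq_one_of_mul_eq_one_left hcard)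
  rw [TwistedGroupRing.twistedMul_single_single, Finsupp.single_eq_single_iff] at hab
  obtain ⟨-, hrs⟩ | ⟨-, h10⟩ := hab
  · have hr : IsUnit r := .of_mul_eq_one ((c g h : R) * s) (by rw [← hrs]; ring)
    exact ⟨hr.unit, g, rfl⟩
  · exact absurd h10 one_ne_zero

/-- if `G` has the unique product property and `R` is an integral domain,
then every unit of the twisted group ring `R(G,c)` is trivial, i.e. of the form `t•δ_g`. -/
theorem twisted_group_ring_units_trivial {G : Type*} [Group G] [UniqueProds G]
    {R : Type*} [CommRing R] [IsDomain R]
    (c : G → G → Rˣ) (hcoc : IsTwoCocycle c) (hnorm : IsNormalised c)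
    (a b : G →₀ R)
    (hab : twistedMul c a b = Finsupp.single 1 1)
    (hba : twistedMul c b a = Finsupp.single 1 1) :
    ∃ (t : Rˣ) (g : G), a = Finsupp.single g (t : R) :=
  twisted_group_ring_units_trivial_general c a b hab
end

section
/- Let G be a group, let R be an indecomposable commutative ring with identity, and let c be a normalised Rˣ-valued 2-cocycle on G. Let A = R(G,c) be the twisted group ring, let B = {t•δ₁ : t ∈ R} be the subalgebra of scalar multiples of the identity, and let P : A → B be the R-linear map P(f) = f(1)•δ₁. Then P is implemented by idempotents — meaning: for every n ∈ N(B) there exists an idempotent e ∈ B with P(n) = n*e = e*n — if and only if every unit of A is trivial, i.e. every a ∈ A admitting b with a*b = b*a = δ₁ equals t•δ_g for some t ∈ Rˣ and g ∈ G. -/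
open Finsupp (single)

section Algebra

variable {G : Type*} [Group G] {R : Type*} [CommRing R] (c : G → G → Rˣ)

@[simp]
lemma twistedMul_zero_left (f : G →₀ R) : twistedMul c 0 f = 0 := by
  simp [twistedMul]

@[simp]
lemma twistedMul_zero_right (f : G →₀ R) : twistedMul c f 0 = 0 := by
  simp [twistedMul]

lemma twistedMul_single_single (g h : G) (s t : R) :
    twistedMul c (single g s) (single h t) = single (g * h) (c g h * s * t) := by
  simp [twistedMul]

lemma twistedMul_add_left (f f' g : G →₀ R) :
    twistedMul c (f + f') g = twistedMul c f g + twistedMul c f' g := by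
  classical
  refine Finsupp.sum_add_index' (fun _ => by simp) fun α r r' => ?_
  simp only [add_mul, mul_add, Finsupp.single_add, Finsupp.sum_add]

lemma twistedMul_add_right (f g g' : G →₀ R) :
    twistedMul c f (g + g') = twistedMul c f g + twistedMul c f g' := by
  classical
  rw [twistedMul, twistedMul, twistedMul, ← Finsupp.sum_add]
  refine Finsupp.sum_congr fun α _ => Finsupp.sum_add_index' (fun _ => by simp) fun β s s' => ?_
  simp only [mul_add, Finsupp.single_add]

lemma twistedMul_smul_left (s : R) (f g : G →₀ R) :
    twistedMul c (s • f) g = s • twistedMul c f g := by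
  classical
  rw [twistedMul, twistedMul, Finsupp.sum_smul_index' (fun _ => by simp), Finsupp.smul_sum]
  refine Finsupp.sum_congr fun α _ => ?_
  rw [Finsupp.smul_sum]
  refine Finsupp.sum_congr fun β _ => ?_
  rw [Finsupp.smul_single, smul_eq_mul]
  ring_nf

lemma twistedMul_single_left_apply_mul (g x : G) (s : R) (f : G →₀ R) :
    twistedMul c (single g s) f (g * x) = c g x * s * f x := by
  classical
  rw [twistedMul, Finsupp.sum_single_index (by simp), Finsupp.sum_apply]
  simp only [Finsupp.single_apply_left (mul_right_injective g), Finsupp.single_apply]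
  rw [Finsupp.sum_ite_eq']
  split_ifs with hx
  · rfl
  · rw [Finsupp.notMem_support_iff.mp hx, mul_zero]

end Algebra

section Cocycle

variable {G : Type*} [Group G] {R : Type*} [CommRing R] {c : G → G → Rˣ}

lemma IsNormalised.twistedMul_single_one_left (hnorm : IsNormalised c) (s : R) (f : G →₀ R) :
    twistedMul c (single 1 s) f = s • f := by
  induction f using Finsupp.induction_linear with
  | zero => simp
  | add f f' hf hf' => rw [twistedMul_add_right, hf, hf', smul_add]
  | single g t => rw [twistedMul_single_single, (hnorm g).1, Finsupp.smul_single]; simp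

lemma IsNormalised.twistedMul_single_one_right (hnorm : IsNormalised c) (f : G →₀ R) (t : R) :
    twistedMul c f (single 1 t) = t • f := by
  induction f using Finsupp.induction_linear with
  | zero => simp
  | add f f' hf hf' => rw [twistedMul_add_left, hf, hf', smul_add]
  | single g s => rw [twistedMul_single_single, (hnorm g).2, Finsupp.smul_single]; simp [mul_comm]

lemma IsTwoCocycle.twistedMul_assoc (hcoc : IsTwoCocycle c) (f g h : G →₀ R) :
    twistedMul c (twistedMul c f g) h = twistedMul c f (twistedMul c g h) := by
  induction f using Finsupp.induction_linear with
  | zero => simp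
  | add f f' hf hf' => simp only [twistedMul_add_left, hf, hf']
  | single α r =>
  induction g using Finsupp.induction_linear with
  | zero => simp
  | add g g' hg hg' => simp only [twistedMul_add_left, twistedMul_add_right, hg, hg']
  | single β s =>
  induction h using Finsupp.induction_linear with
  | zero => simp
  | add h h' hh hh' => simp only [twistedMul_add_right, hh, hh']
  | single γ t =>
  have hc := congrArg Units.val (hcoc α β γ)
  push_cast at hc
  simp only [twistedMul_single_single, mul_assoc]
  congr 1
  linear_combination r * s * t * hc

lemma IsTwoCocycle.apply_inv_self_comm (hcoc : IsTwoCocycle c) (hnorm : IsNormalised c) (g : G) :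
    c g⁻¹ g = c g g⁻¹ := by
  simpa [(hnorm g).1, (hnorm g).2] using (hcoc g g⁻¹ g).symm

end Cocycle

section Units

variable {G : Type*} [Group G] {R : Type*} [CommRing R] (c : G → G → Rˣ)

def IsTwistedUnit (a : G →₀ R) : Prop :=
  ∃ b : G →₀ R, twistedMul c a b = single 1 1 ∧ twistedMul c b a = single 1 1

def HasOnlyTrivialUnits : Prop :=
  ∀ a : G →₀ R, IsTwistedUnit c a → ∃ (t : Rˣ) (g : G), a = single g (t : R)

def IsInNormaliser (n : G →₀ R) : Prop :=
  ∃ k : G →₀ R,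
    twistedMul c (twistedMul c k n) k = k ∧ twistedMul c (twistedMul c n k) n = n ∧
    ∀ b : G →₀ R, (∃ t : R, b = single 1 t) →
      (∃ t : R, twistedMul c (twistedMul c k b) n = single 1 t) ∧
      (∃ t : R, twistedMul c (twistedMul c n b) k = single 1 t)

def IsImplementedByIdempotents : Prop :=
  ∀ n : G →₀ R, IsInNormaliser c n →
    ∃ e : G →₀ R, (∃ t : R, e = single 1 t) ∧ twistedMul c e e = e ∧
      single 1 (n 1) = twistedMul c n e ∧ single 1 (n 1) = twistedMul c e n

variable {c}

lemma IsTwistedUnit.mul (hcoc : IsTwoCocycle c) (hnorm : IsNormalised c)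
    {a a' : G →₀ R} (ha : IsTwistedUnit c a) (ha' : IsTwistedUnit c a') :
    IsTwistedUnit c (twistedMul c a a') := by
  obtain ⟨b, hab, hba⟩ := ha
  obtain ⟨b', hab', hba'⟩ := ha'
  refine ⟨twistedMul c b' b, ?_, ?_⟩
  · rw [hcoc.twistedMul_assoc, ← hcoc.twistedMul_assoc a', hab',
      hnorm.twistedMul_single_one_left, one_smul, hab]
  · rw [hcoc.twistedMul_assoc, ← hcoc.twistedMul_assoc b, hba,
      hnorm.twistedMul_single_one_left, one_smul, hba']

lemma isTwistedUnit_single_one (hcoc : IsTwoCocycle c) (hnorm : IsNormalised c) (g : G) :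
    IsTwistedUnit c (single g (1 : R)) := by
  refine ⟨single g⁻¹ ↑(c g g⁻¹)⁻¹, ?_, ?_⟩
  · rw [twistedMul_single_single, mul_inv_cancel, mul_one, Units.mul_inv]
  · rw [twistedMul_single_single, inv_mul_cancel, mul_one, hcoc.apply_inv_self_comm hnorm,
      Units.mul_inv]

lemma isUnit_of_isTwistedUnit_single {g : G} {r : R} (h : IsTwistedUnit c (single g r)) :
    IsUnit r := by
  obtain ⟨b, hrb, -⟩ := h
  have h1 := DFunLike.congr_fun hrb (g * g⁻¹)
  rw [twistedMul_single_left_apply_mul, mul_inv_cancel, Finsupp.single_eq_same] at h1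
  exact IsUnit.of_mul_eq_one (↑(c g g⁻¹) * b g⁻¹) (by linear_combination h1)

lemma IsTwistedUnit.isInNormaliser (hnorm : IsNormalised c) {a : G →₀ R}
    (ha : IsTwistedUnit c a) : IsInNormaliser c a := by
  obtain ⟨b, hab, hba⟩ := ha
  refine ⟨b, ?_, ?_, ?_⟩
  · rw [hba, hnorm.twistedMul_single_one_left, one_smul]
  · rw [hab, hnorm.twistedMul_single_one_left, one_smul]
  · rintro _ ⟨t, rfl⟩
    simp only [hnorm.twistedMul_single_one_right, twistedMul_smul_left, hab, hba,
      Finsupp.smul_single, smul_eq_mul, mul_one]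
    exact ⟨⟨t, rfl⟩, ⟨t, rfl⟩⟩

lemma isIdempotentElem_of_twistedMul_single_one (hnorm : IsNormalised c) {t : R}
    (h : twistedMul c (single 1 t) (single 1 t) = single 1 t) : IsIdempotentElem t := by
  rwa [hnorm.twistedMul_single_one_left, Finsupp.smul_single, smul_eq_mul,
    (Finsupp.single_injective 1).eq_iff] at h

lemma isIdempotentElem_of_twistedMul_eq_single_one (hcoc : IsTwoCocycle c)
    (hnorm : IsNormalised c) {x y : G →₀ R} {t : R}
    (hxyx : twistedMul c (twistedMul c x y) x = x) (hxy : twistedMul c x y = single 1 t) :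
    IsIdempotentElem t := by
  refine isIdempotentElem_of_twistedMul_single_one hnorm ?_
  rw [← hxy, ← hcoc.twistedMul_assoc, hxyx]

end Units

section Expectation

variable {G : Type*} [Group G] {R : Type*} [CommRing R] {c : G → G → Rˣ}

lemma IsInNormaliser.exists_eq_single (hInd : ∀ e : R, IsIdempotentElem e → e = 0 ∨ e = 1)
    (hcoc : IsTwoCocycle c) (hnorm : IsNormalised c) (hunits : HasOnlyTrivialUnits c)
    {n : G →₀ R} (hn : IsInNormaliser c n) : ∃ (g : G) (r : R), n = single g r := by
  obtain ⟨k, hknk, hnkn, hB⟩ := hn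
  obtain ⟨⟨s, hs⟩, ⟨t, ht⟩⟩ := hB (single 1 1) ⟨1, rfl⟩
  rw [hnorm.twistedMul_single_one_right, one_smul] at hs ht
  rcases hInd t (isIdempotentElem_of_twistedMul_eq_single_one hcoc hnorm hnkn ht) with rfl | rfl
  · refine ⟨1, 0, ?_⟩
    rw [← hnkn, ht, Finsupp.single_zero, twistedMul_zero_left]
  rcases hInd s (isIdempotentElem_of_twistedMul_eq_single_one hcoc hnorm hknk hs) with rfl | rfl
  · have hk : k = 0 := by rw [← hknk, hs, Finsupp.single_zero, twistedMul_zero_left]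
    refine ⟨1, 0, ?_⟩
    rw [← hnkn, hk, twistedMul_zero_right, twistedMul_zero_left, Finsupp.single_zero]
  obtain ⟨u, g, rfl⟩ := hunits n ⟨k, ht, hs⟩
  exact ⟨g, u, rfl⟩

lemma isImplementedByIdempotents_of_hasOnlyTrivialUnits
    (hInd : ∀ e : R, IsIdempotentElem e → e = 0 ∨ e = 1) (hcoc : IsTwoCocycle c)
    (hnorm : IsNormalised c) (hunits : HasOnlyTrivialUnits c) :
    IsImplementedByIdempotents c := by
  intro n hn
  obtain ⟨g, r, rfl⟩ := hn.exists_eq_single hInd hcoc hnorm hunits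
  by_cases hg : g = 1
  · subst hg
    refine ⟨single 1 1, ⟨1, rfl⟩, ?_, ?_, ?_⟩ <;>
      simp [hnorm.twistedMul_single_one_left]
  · refine ⟨0, ⟨0, Finsupp.single_zero 1 |>.symm⟩, ?_, ?_, ?_⟩ <;>
      simp [hg]

lemma hasOnlyTrivialUnits_of_isImplementedByIdempotents
    (hInd : ∀ e : R, IsIdempotentElem e → e = 0 ∨ e = 1) (hcoc : IsTwoCocycle c)
    (hnorm : IsNormalised c) (H : IsImplementedByIdempotents c) : HasOnlyTrivialUnits c := by
  intro a ha
  by_cases ha0 : a = 0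
  · obtain ⟨b, hab, -⟩ := ha
    exact ⟨1, 1, by rw [Units.val_one, ← hab, ha0, twistedMul_zero_left]⟩
  obtain ⟨g, hg⟩ : ∃ g, a g ≠ 0 := Finsupp.ne_iff.mp ha0
  obtain ⟨d, hδd, hdδ⟩ := isTwistedUnit_single_one hcoc hnorm (R := R) g
  set n := twistedMul c d a
  have hδn : twistedMul c (single g 1) n = a := by
    rw [← hcoc.twistedMul_assoc, hδd, hnorm.twistedMul_single_one_left, one_smul]
  have hn1 : n 1 = a g := by
    have h := DFunLike.congr_fun hδn (g * 1)
    rwa [twistedMul_single_left_apply_mul, (hnorm g).2, Units.val_one, one_mul, one_mul,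
      mul_one] at h
  obtain ⟨e, ⟨t, rfl⟩, hee, hPn, -⟩ :=
    H n ((IsTwistedUnit.mul hcoc hnorm ⟨_, hdδ, hδd⟩ ha).isInNormaliser hnorm)
  rw [hnorm.twistedMul_single_one_right] at hPn
  rcases hInd t (isIdempotentElem_of_twistedMul_single_one hnorm hee) with rfl | rfl
  · rw [zero_smul, Finsupp.single_eq_zero, hn1] at hPn
    exact absurd hPn hg
  rw [one_smul] at hPn
  have ha_eq : a = single g (a g) := by
    rw [← hn1]
    conv_lhs => rw [← hδn, ← hPn]
    rw [twistedMul_single_single, mul_one, (hnorm g).2, Units.val_one, one_mul, one_mul]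
  obtain ⟨u, hu⟩ := isUnit_of_isTwistedUnit_single (ha_eq ▸ ha)
  exact ⟨u, g, hu ▸ ha_eq⟩

end Expectation

/-- in a twisted group ring over an indecomposable commutative ring, with
`B = R·δ₁` and `P(f) = f(1)·δ₁`, the expectation `P` is implemented by idempotents iff
every unit of `R(G,c)` is trivial. -/
theorem implemented_by_idempotents_iff_trivial_units {G : Type*} [Group G]
    {R : Type*} [CommRing R]
    (hInd : ∀ e : R, IsIdempotentElem e → e = 0 ∨ e = 1)
    (c : G → G → Rˣ) (hcoc : IsTwoCocycle c) (hnorm : IsNormalised c) :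
    (∀ n : G →₀ R,
        (∃ k : G →₀ R,
          twistedMul c (twistedMul c k n) k = k ∧
          twistedMul c (twistedMul c n k) n = n ∧
          ∀ b : G →₀ R, (∃ t : R, b = Finsupp.single 1 t) →
            (∃ t : R, twistedMul c (twistedMul c k b) n = Finsupp.single 1 t) ∧
            (∃ t : R, twistedMul c (twistedMul c n b) k = Finsupp.single 1 t)) →
        ∃ e : G →₀ R, (∃ t : R, e = Finsupp.single 1 t) ∧ twistedMul c e e = e ∧
          Finsupp.single 1 (n 1) = twistedMul c n e ∧
          Finsupp.single 1 (n 1) = twistedMul c e n) ↔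
      (∀ a b : G →₀ R, twistedMul c a b = Finsupp.single 1 1 →
          twistedMul c b a = Finsupp.single 1 1 →
          ∃ (t : Rˣ) (g : G), a = Finsupp.single g (t : R)) :=
  ⟨fun H a b hab hba =>
      hasOnlyTrivialUnits_of_isImplementedByIdempotents hInd hcoc hnorm H a ⟨b, hab, hba⟩,
    fun H => isImplementedByIdempotents_of_hasOnlyTrivialUnits hInd hcoc hnorm
      fun a ⟨b, hab, hba⟩ => H a b hab hba⟩
end
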